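/- Interpret letters over the alphabet {a,b,c,x} as moves on the 2-dimensional integer grid: a = (1,0), b = (0,1), c = (1,1), x = (1,1). Then for any two grid points (p,q) ⪯ (r,s) (i.e., p ≤ r and q ≤ s), there exists exactly one word over {a,b,c} whose moves go from (p,q) to (r,s) and which contains none of ab, ba, ac, bc as a factor. -/

import Mathlib

/-- The 4-letter alphabet {a, b, c, x}. -/
inductive Ltr | a | b | c | x
deriving DecidableEq

/-- The forbidden two-letter factors: ab, ba, ac, bc. -/
def forb : List (List Ltr) := [[.a, .b], [.b, .a], [.a, .c], [.b, .c]]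

/-- `w` avoids all of ab, ba, ac, bc as factors. -/
def Avoids (w : List Ltr) : Prop := ∀ f ∈ forb, ¬ f <:+: w

/-- Moves on the 2-dimensional grid: a = (1,0), b = (0,1), c = (1,1), x = (1,1). -/
def mv : Ltr → ℕ × ℕ
  | .a => (1, 0)
  | .b => (0, 1)
  | .c => (1, 1)
  | .x => (1, 1)

/-- Total displacement of a word. -/
def disp (w : List Ltr) : ℕ × ℕ := (w.map mv).sum

/-- `w` is a word over {a,b,c} whose moves go from `(p,q)` to `(r,s)`. -/
def Connects (p q r s : ℕ) (w : List Ltr) : Prop :=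
  Ltr.x ∉ w ∧ p + (disp w).1 = r ∧ q + (disp w).2 = s

/-!
Forbidding ab, ba, ac and bc means that a letter a or b can only be followed by the same letter,
so an avoiding word over {a,b,c} is c^k a^m or c^k b^n. Its displacement (k + m, k + n) then
determines it: k is the smaller coordinate and the excess of the other one is m or n.
-/

open List

def AllowedPair (u v : Ltr) : Prop := [u, v] ∉ forb

theorem avoids_iff_isChain {w : List Ltr} : Avoids w ↔ w.IsChain AllowedPair := by
  constructor
  · intro hw
    refine isChain_iff_forall_rel_of_append_cons_cons.2 fun u v l₁ l₂ hsplit hforb => ?_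
    exact hw _ hforb ⟨l₁, l₂, by simp [hsplit]⟩
  · intro hw f hf hinf
    obtain ⟨u, v, rfl⟩ : ∃ u v, f = [u, v] := by
      simp only [forb, mem_cons, not_mem_nil, or_false] at hf
      rcases hf with rfl | rfl | rfl | rfl <;> exact ⟨_, _, rfl⟩
    exact isChain_pair.1 (hw.infix hinf) hf

theorem allowedPair_self (u : Ltr) : AllowedPair u u := by
  cases u <;> simp [AllowedPair, forb]

theorem AllowedPair.eq_of_ne {u v : Ltr} (h : AllowedPair u v) (huc : u ≠ .c) (hux : u ≠ .x)
    (hvx : v ≠ .x) : v = u := by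
  cases u <;> cases v <;> simp_all [AllowedPair, forb]

theorem eq_replicate_of_isChain_cons {u : Ltr} {t : List Ltr} (h : (u :: t).IsChain AllowedPair)
    (huc : u ≠ .c) (hx : Ltr.x ∉ u :: t) : t = replicate t.length u := by
  have h' : (u :: t).IsChain fun y z => AllowedPair y z ∧ y ≠ .x ∧ z ≠ .x :=
    h.imp_of_mem_imp fun y z hy hz hyz =>
      ⟨hyz, ne_of_mem_of_not_mem hy hx, ne_of_mem_of_not_mem hz hx⟩
  refine eq_replicate_iff.2 ⟨rfl, h'.cons_induction (· = u) t ?_ rfl⟩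
  rintro y z ⟨hyz, hyx, hzx⟩ rfl
  exact hyz.eq_of_ne huc hyx hzx

def cab (k m n : ℕ) : List Ltr := replicate k .c ++ replicate m .a ++ replicate n .b

theorem disp_cab (k m n : ℕ) : disp (cab k m n) = (k + m, k + n) := by
  simp [cab, disp, mv]

theorem x_not_mem_cab (k m n : ℕ) : Ltr.x ∉ cab k m n := by
  simp [cab, mem_replicate]

theorem isChain_cab (k : ℕ) {m n : ℕ} (h : m = 0 ∨ n = 0) :
    (cab k m n).IsChain AllowedPair := by
  rcases h with rfl | rfl <;>
    simp [cab, isChain_append, isChain_replicate_of_rel _ (allowedPair_self _), getLast?_replicate,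
      head?_replicate, AllowedPair, forb]

theorem exists_eq_cab {w : List Ltr} (hx : Ltr.x ∉ w) (hw : w.IsChain AllowedPair) :
    ∃ k m n, (m = 0 ∨ n = 0) ∧ w = cab k m n := by
  induction w with
  | nil => exact ⟨0, 0, 0, Or.inl rfl, rfl⟩
  | cons u t ih =>
    cases u with
    | a =>
      refine ⟨0, t.length + 1, 0, Or.inr rfl, ?_⟩
      rw [eq_replicate_of_isChain_cons hw (by decide) hx]
      simp [cab, replicate_succ]
    | b =>
      refine ⟨0, 0, t.length + 1, Or.inl rfl, ?_⟩
      rw [eq_replicate_of_isChain_cons hw (by decide) hx]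
      simp [cab, replicate_succ]
    | c =>
      obtain ⟨k, m, n, hmn, rfl⟩ := ih (fun h => hx (mem_cons_of_mem _ h)) hw.tail
      exact ⟨k + 1, m, n, hmn, by simp [cab, replicate_succ]⟩
    | x => simp at hx

/-- Between any two grid points `(p,q) ⪯ (r,s)` there is exactly one word over
{a,b,c} going from `(p,q)` to `(r,s)` that avoids the factors ab, ba, ac, bc. -/
theorem unique_avoiding_path (p q r s : ℕ) (hp : p ≤ r) (hq : q ≤ s) :
    ∃! w : List Ltr, Connects p q r s w ∧ Avoids w := by
  refine ⟨cab (min (r - p) (s - q)) (r - p - (s - q)) (s - q - (r - p)), ?_, ?_⟩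
  · refine ⟨⟨x_not_mem_cab _ _ _, ?_⟩, avoids_iff_isChain.2 (isChain_cab _ (by omega))⟩
    rw [disp_cab]
    omega
  · rintro w ⟨⟨hx, hr, hs⟩, hw⟩
    obtain ⟨k, m, n, hmn, rfl⟩ := exists_eq_cab hx (avoids_iff_isChain.1 hw)
    rw [disp_cab] at hr hs
    obtain rfl : k = min (r - p) (s - q) := by omega
    obtain rfl : m = r - p - (s - q) := by omega
    obtain rfl : n = s - q - (r - p) := by omega
    rfl
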